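/- Under the hypotheses of the impropriety proposition (marginal sampling density in y,z given ζ obtained by integrating out η against an improper conditional prior, with ∫ p(y,z|η,ζ) dy = p₂(z|ζ) > 0 independent of η and ∫ p(η,ζ) dη = ∞), the double integral ∫∫ p(y,z|ζ) dy dz is infinite for each ζ. -/
import Mathlib


open MeasureTheory ENNReal

/-- Corollary: under the hypotheses of the impropriety proposition (with `ζ`
fixed but `z` now varying over a space of nonzero measure), the double integral
`∫∫ p(y,z|ζ) dy dz` is infinite, where
`p(y,z|ζ) = (1/pζ) ∫ p(y,z|η,ζ) π(η) dη`. -/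
theorem impropriety_double_integral
    {Y Z H : Type*} [MeasurableSpace Y] [MeasurableSpace Z] [MeasurableSpace H]
    (μY : Measure Y) (μZ : Measure Z) (μH : Measure H)
    [SigmaFinite μY] [SigmaFinite μZ] [SigmaFinite μH]
    (hμZ : μZ ≠ 0)
    (p : Y → Z → H → ℝ≥0∞) (π : H → ℝ≥0∞)
    (hp : Measurable (fun q : Y × Z × H => p q.1 q.2.1 q.2.2))
    (hπ : Measurable π)
    (pζ : ℝ≥0∞) (hpζ0 : 0 < pζ) (hpζtop : pζ < ∞)
    (p₂ : Z → ℝ≥0∞) (hp₂ : ∀ z, 0 < p₂ z)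
    (hmarg : ∀ η z, ∫⁻ y, p y z η ∂μY = p₂ z)
    (himproper : ∫⁻ η, π η ∂μH = ∞) :
    ∫⁻ z, ∫⁻ y, (1 / pζ) * ∫⁻ η, p y z η * π η ∂μH ∂μY ∂μZ = ∞ := by
  have hc0 : (1 / pζ) ≠ 0 := by
    simp [hpζtop.ne]
  have hctop : (1 / pζ) ≠ ∞ := by
    simp [hpζ0.ne']
  have key : ∀ z, ∫⁻ y, (1 / pζ) * ∫⁻ η, p y z η * π η ∂μH ∂μY = ∞ := by
    intro z
    have hmeas : AEMeasurable (fun q : Y × H => p q.1 z q.2 * π q.2)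
        (μY.prod μH) := by
      apply AEMeasurable.mul
      · exact (hp.comp (measurable_fst.prodMk
          ((measurable_const : Measurable fun _ : Y × H => z).prodMk
            measurable_snd))).aemeasurable
      · exact (hπ.comp measurable_snd).aemeasurable
    have hswap : ∫⁻ y, ∫⁻ η, p y z η * π η ∂μH ∂μY
        = ∫⁻ η, ∫⁻ y, p y z η * π η ∂μY ∂μH :=
      lintegral_lintegral_swap hmeas
    have hinner : ∫⁻ y, ∫⁻ η, p y z η * π η ∂μH ∂μY = ∞ := by
      rw [hswap]
      have h1 : ∀ η, ∫⁻ y, p y z η * π η ∂μY = p₂ z * π η := by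
        intro η
        have hm : Measurable fun y => p y z η :=
          hp.comp (measurable_id.prodMk
            ((measurable_const : Measurable fun _ : Y => z).prodMk
              measurable_const))
        rw [lintegral_mul_const _ hm, hmarg, mul_comm]
      rw [lintegral_congr h1, lintegral_const_mul _ hπ, himproper,
        ENNReal.mul_top (hp₂ z).ne']
    rw [lintegral_const_mul' _ _ hctop, hinner, ENNReal.mul_top hc0]
  rw [lintegral_congr key, lintegral_const, ENNReal.top_mul]
  simpa [Measure.measure_univ_eq_zero] using hμZ
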